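/- Let μ ∈ ℝ and 0 < ρ < 1, set γ = √(1−ρ²), let ν(x) = e^{−x²/2}/√(2π), let He_k denote the probabilists' Hermite polynomial, and define Q_N : ℝ → ℝ recursively by Q_0 ≡ 1 and Q_{N+1}(x) = (μ+x) ∫_ℝ Q_N(ρx + γy) ν(y) dy. Define the Fourier coefficients q_{N,k} := (1/√(k!)) ∫_ℝ Q_N(x)·He_k(x) ν(x) dx for k ≥ 0, with the convention q_{N,−1} := 0. Then for all N ≥ 0 and all k ≥ 0, q_{N+1,k} = √k·ρ^{k−1}·q_{N,k−1} + μ·ρ^k·q_{N,k} + √(k+1)·ρ^{k+1}·q_{N,k+1}; moreover q_{0,0} = 1, q_{0,k} = 0 for k ≥ 1, and q_{N,k} = 0 for k > N. -/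

import Mathlib

/-!
Gaussian integration by parts, `E[Z p(Z)] = E[p'(Z)]` for `Z ~ N(0,1)`, gives
`E[p(Z) He_k(Z)] = E[p⁽ᵏ⁾(Z)]`, hence the orthogonality of the Hermite polynomials, and also
Mehler's identity `E[He_k(ρx + γZ)] = ρ^k He_k(x)` when `ρ² + γ² = 1`. As the `He_k` span all
polynomials, `p ↦ (x ↦ E[p(ρx + γZ)])` maps polynomials to polynomials and multiplies the `k`-th
Hermite coefficient by `ρ^k`. So every `Q_N` is a polynomial, and the factor `μ + x` mixes
neighbouring coefficients through `x He_k = He_{k+1} + k He_{k-1}`; normalising by `√k!` gives the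
recurrence, from which the vanishing above degree `N` follows by induction.
-/

open MeasureTheory ProbabilityTheory Polynomial
open scoped Nat

namespace Polynomial

theorem derivative_hermite_succ (n : ℕ) :
    derivative (hermite (n + 1)) = ((n : ℤ[X]) + 1) * hermite n := by
  induction n with
  | zero => simp
  | succ n ih =>
    rw [hermite_succ (n + 1), derivative_sub, derivative_mul, derivative_X, ih, derivative_mul]
    simp only [derivative_add, derivative_natCast, derivative_one, zero_mul, zero_add]
    rw [hermite_succ n]
    push_cast
    ring

noncomputable def realHermite (n : ℕ) : ℝ[X] := (hermite n).map (Int.castRingHom ℝ)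

@[simp]
theorem realHermite_zero : realHermite 0 = 1 := by simp [realHermite]

theorem realHermite_succ (n : ℕ) :
    realHermite (n + 1) = X * realHermite n - derivative (realHermite n) := by
  simp [realHermite, hermite_succ, derivative_map]

theorem derivative_realHermite_succ (n : ℕ) :
    derivative (realHermite (n + 1)) = C ((n : ℝ) + 1) * realHermite n := by
  rw [realHermite, derivative_map, derivative_hermite_succ, Polynomial.map_mul]
  simp [realHermite]

theorem X_mul_realHermite (n : ℕ) :
    X * realHermite n = realHermite (n + 1) + C (n : ℝ) * realHermite (n - 1) := by
  cases n with
  | zero => simp [realHermite_succ]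
  | succ n => rw [realHermite_succ (n + 1), derivative_realHermite_succ]; push_cast; ring

theorem natDegree_realHermite (n : ℕ) : (realHermite n).natDegree = n := by
  rw [realHermite, natDegree_map_eq_of_injective Int.cast_injective, natDegree_hermite]

theorem eval_realHermite (n : ℕ) (x : ℝ) : (realHermite n).eval x = aeval x (hermite n) := by
  rw [realHermite, eval_map, aeval_def]; rfl

theorem realHermite_add_two (n : ℕ) :
    realHermite (n + 2) = X * realHermite (n + 1) - C ((n : ℝ) + 1) * realHermite n := by
  rw [X_mul_realHermite]; push_cast; ring

theorem span_range_realHermite : Submodule.span ℝ (Set.range realHermite) = ⊤ := by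
  set S := Submodule.span ℝ (Set.range realHermite)
  have hmem : ∀ n, realHermite n ∈ S := fun n ↦ Submodule.subset_span ⟨n, rfl⟩
  have hX : ∀ p ∈ S, X * p ∈ S := by
    intro p hp
    induction hp using Submodule.span_induction with
    | mem _ h =>
      obtain ⟨n, rfl⟩ := h
      rw [X_mul_realHermite, C_mul']
      exact add_mem (hmem _) (Submodule.smul_mem _ _ (hmem _))
    | zero => simp
    | add p q _ _ hp hq => rw [mul_add]; exact add_mem hp hq
    | smul c p _ hp => rw [mul_smul_comm]; exact Submodule.smul_mem _ _ hp
  refine Submodule.eq_top_iff'.2 fun p ↦ ?_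
  induction p using Polynomial.induction_on with
  | C a =>
    rw [← mul_one (C a), C_mul', ← realHermite_zero]
    exact Submodule.smul_mem _ _ (hmem 0)
  | add p q hp hq => exact add_mem hp hq
  | monomial n a h => rw [pow_succ, ← mul_assoc, mul_comm]; exact hX _ h

end Polynomial

theorem integrable_eval_gaussianReal (p : ℝ[X]) (m : ℝ) (v : NNReal) :
    Integrable (fun x ↦ p.eval x) (gaussianReal m v) := by
  have hexp : (0 : ℝ) ∈ interior (integrableExpSet id (gaussianReal m v)) := by
    simp [integrableExpSet_id_gaussianReal]
  induction p using Polynomial.induction_on' with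
  | add p q hp hq => simp only [eval_add]; exact hp.add hq
  | monomial n a => simpa using (integrable_pow_of_mem_interior_integrableExpSet hexp n).const_mul a

theorem hasDerivAt_gaussianPDFReal_zero_one (x : ℝ) :
    HasDerivAt (gaussianPDFReal 0 1) (-x * gaussianPDFReal 0 1 x) x := by
  have hexp : HasDerivAt (fun y ↦ -y ^ 2 / 2) (-x) x :=
    ((hasDerivAt_pow 2 x).neg.div_const 2).congr_deriv (by ring)
  have hpdf : gaussianPDFReal 0 1 = fun y ↦ (√(2 * Real.pi))⁻¹ * Real.exp (-y ^ 2 / 2) := by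
    ext y; simp [gaussianPDFReal_def]
  rw [hpdf]
  exact (hexp.exp.const_mul _).congr_deriv (by ring)

theorem integrable_gaussianPDFReal_mul {m : ℝ} {v : NNReal} (hv : v ≠ 0) {f : ℝ → ℝ}
    (hf : Integrable f (gaussianReal m v)) : Integrable (fun x ↦ gaussianPDFReal m v x * f x) := by
  rw [gaussianReal_of_var_ne_zero _ hv,
    integrable_withDensity_iff_integrable_smul' (measurable_gaussianPDF _ _)
      (ae_of_all _ fun _ ↦ gaussianPDF_lt_top)] at hf
  simpa using hf

theorem integral_mul_gaussianReal_eq_integral_deriv {f f' : ℝ → ℝ}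
    (hf : ∀ x, HasDerivAt f (f' x) x) (hf_int : Integrable f (gaussianReal 0 1))
    (hf'_int : Integrable f' (gaussianReal 0 1))
    (hxf_int : Integrable (fun x ↦ x * f x) (gaussianReal 0 1)) :
    ∫ x, x * f x ∂gaussianReal 0 1 = ∫ x, f' x ∂gaussianReal 0 1 := by
  have hxf := integrable_gaussianPDFReal_mul one_ne_zero hxf_int
  have hf' := integrable_gaussianPDFReal_mul one_ne_zero hf'_int
  simp only [integral_gaussianReal_eq_integral_smul one_ne_zero, smul_eq_mul]
  rw [← sub_eq_zero, ← integral_sub hxf hf']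
  exact integral_eq_zero_of_hasDerivAt_of_integrable
    (fun x ↦ ((hasDerivAt_gaussianPDFReal_zero_one x).mul (hf x)).neg.congr_deriv (by ring))
    (hxf.sub hf') (integrable_gaussianPDFReal_mul one_ne_zero hf_int).neg

noncomputable def gaussianExpectation : ℝ[X] →ₗ[ℝ] ℝ where
  toFun p := ∫ x, p.eval x ∂gaussianReal 0 1
  map_add' p q := by
    simp only [eval_add]
    exact integral_add (integrable_eval_gaussianReal p 0 1) (integrable_eval_gaussianReal q 0 1)
  map_smul' c p := by simp [integral_const_mul]

theorem gaussianExpectation_apply (p : ℝ[X]) :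
    gaussianExpectation p = ∫ x, p.eval x ∂gaussianReal 0 1 := rfl

@[simp]
theorem gaussianExpectation_one : gaussianExpectation 1 = 1 := by
  simp [gaussianExpectation_apply]

theorem gaussianExpectation_C_mul (c : ℝ) (p : ℝ[X]) :
    gaussianExpectation (C c * p) = c * gaussianExpectation p := by
  rw [C_mul', map_smul, smul_eq_mul]

theorem gaussianExpectation_X_mul (p : ℝ[X]) :
    gaussianExpectation (X * p) = gaussianExpectation (derivative p) := by
  simpa [gaussianExpectation_apply] using integral_mul_gaussianReal_eq_integral_deriv
    (fun x ↦ p.hasDerivAt x) (integrable_eval_gaussianReal p 0 1)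
    (integrable_eval_gaussianReal (derivative p) 0 1)
    ((integrable_eval_gaussianReal (X * p) 0 1).congr (ae_of_all _ fun x ↦ by simp))

theorem gaussianExpectation_mul_realHermite (p : ℝ[X]) (k : ℕ) :
    gaussianExpectation (p * realHermite k) = gaussianExpectation (derivative^[k] p) := by
  induction k generalizing p with
  | zero => simp
  | succ k ih =>
    have h : p * realHermite (k + 1)
        = X * (p * realHermite k) - (derivative p * realHermite k + p * derivative (realHermite k))
          + derivative p * realHermite k := by
      rw [realHermite_succ]; ring
    rw [h, map_add, map_sub, gaussianExpectation_X_mul, derivative_mul, sub_self, zero_add, ih,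
      Function.iterate_succ_apply]

theorem gaussianExpectation_realHermite_mul_realHermite_of_ne {j k : ℕ} (hjk : j ≠ k) :
    gaussianExpectation (realHermite j * realHermite k) = 0 := by
  rcases hjk.lt_or_gt with h | h
  · rw [gaussianExpectation_mul_realHermite,
      iterate_derivative_eq_zero ((natDegree_realHermite j).trans_lt h), map_zero]
  · rw [mul_comm, gaussianExpectation_mul_realHermite,
      iterate_derivative_eq_zero ((natDegree_realHermite k).trans_lt h), map_zero]

theorem gaussianExpectation_realHermite_comp {ρ γ : ℝ} (hργ : ρ ^ 2 + γ ^ 2 = 1) (x : ℝ) (k : ℕ) :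
    gaussianExpectation ((realHermite k).comp (C (ρ * x) + C γ * X))
      = ρ ^ k * (realHermite k).eval x := by
  set M : ℝ[X] := C (ρ * x) + C γ * X
  have hM : ∀ f : ℝ[X], gaussianExpectation (M * f.comp M)
      = ρ * x * gaussianExpectation (f.comp M)
        + γ ^ 2 * gaussianExpectation ((derivative f).comp M) := by
    intro f
    rw [add_mul, mul_assoc, map_add, gaussianExpectation_C_mul, gaussianExpectation_C_mul,
      gaussianExpectation_X_mul, derivative_comp]
    simp only [M, derivative_add, derivative_C, derivative_C_mul_X, zero_add]
    rw [gaussianExpectation_C_mul]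
    ring
  induction k using Nat.twoStepInduction with
  | zero => simp
  | one =>
    simpa [realHermite_succ] using hM 1
  | more n ih₀ ih₁ =>
    rw [realHermite_add_two, sub_comp, mul_comp, X_comp, mul_comp, C_comp, map_sub,
      gaussianExpectation_C_mul, hM, derivative_realHermite_succ, mul_comp, C_comp,
      gaussianExpectation_C_mul, ih₀, ih₁]
    simp only [eval_sub, eval_mul, eval_X, eval_C]
    linear_combination ((n + 1) * ρ ^ n * (realHermite n).eval x) * hργ

-- `r` is the Ornstein–Uhlenbeck (Mehler) transform of `p`: it multiplies the `k`-th Hermite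
-- component by `ρ ^ k`.
theorem exists_eval_eq_gaussianExpectation_comp {ρ γ : ℝ} (hργ : ρ ^ 2 + γ ^ 2 = 1) (p : ℝ[X]) :
    ∃ r : ℝ[X], (∀ x, gaussianExpectation (p.comp (C (ρ * x) + C γ * X)) = r.eval x) ∧
      ∀ k, gaussianExpectation (r * realHermite k)
        = ρ ^ k * gaussianExpectation (p * realHermite k) := by
  have hp : p ∈ Submodule.span ℝ (Set.range realHermite) := by
    rw [span_range_realHermite]; trivial
  induction hp using Submodule.span_induction with
  | mem _ h =>
    obtain ⟨j, rfl⟩ := h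
    refine ⟨C (ρ ^ j) * realHermite j, fun x ↦ ?_, fun k ↦ ?_⟩
    · rw [gaussianExpectation_realHermite_comp hργ, eval_mul, eval_C]
    · rw [mul_assoc, gaussianExpectation_C_mul]
      rcases eq_or_ne j k with rfl | hjk
      · rfl
      · simp [gaussianExpectation_realHermite_mul_realHermite_of_ne hjk]
  | zero => exact ⟨0, by simp, by simp⟩
  | add p q _ _ hp hq =>
    obtain ⟨r, hr, hr'⟩ := hp
    obtain ⟨s, hs, hs'⟩ := hq
    refine ⟨r + s, fun x ↦ by rw [add_comp, map_add, hr, hs, eval_add], fun k ↦ ?_⟩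
    simp [add_mul, hr', hs', mul_add]
  | smul c p _ hp =>
    obtain ⟨r, hr, hr'⟩ := hp
    refine ⟨c • r, fun x ↦ by rw [smul_comp, map_smul, hr, eval_smul], fun k ↦ ?_⟩
    simp [hr', mul_left_comm]

theorem gaussianExpectation_affine_mul_mul_realHermite (μ : ℝ) (r : ℝ[X]) (k : ℕ) :
    gaussianExpectation ((C μ + X) * r * realHermite k)
      = k * gaussianExpectation (r * realHermite (k - 1))
        + μ * gaussianExpectation (r * realHermite k)
        + gaussianExpectation (r * realHermite (k + 1)) := by
  have h : (C μ + X) * r * realHermite k = C (k : ℝ) * (r * realHermite (k - 1))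
      + C μ * (r * realHermite k) + r * realHermite (k + 1) := by
    rw [add_mul, add_mul, mul_assoc X, mul_left_comm X, X_mul_realHermite]; ring
  rw [h, map_add, map_add, gaussianExpectation_C_mul, gaussianExpectation_C_mul]

noncomputable def hermiteCoeff (f : ℝ → ℝ) (k : ℕ) : ℝ :=
  ∫ x, f x * aeval x (hermite k) ∂gaussianReal 0 1

theorem hermiteCoeff_eq_gaussianExpectation {f : ℝ → ℝ} {p : ℝ[X]} (hf : ∀ x, f x = p.eval x)
    (k : ℕ) : hermiteCoeff f k = gaussianExpectation (p * realHermite k) := by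
  simp [hermiteCoeff, gaussianExpectation_apply, hf, eval_realHermite]

theorem exists_eval_eq_and_hermiteCoeff_eq {μ ρ γ : ℝ} (hργ : ρ ^ 2 + γ ^ 2 = 1) {f g : ℝ → ℝ}
    {p : ℝ[X]} (hf : ∀ x, f x = p.eval x)
    (hg : ∀ x, g x = (μ + x) * ∫ y, f (ρ * x + γ * y) ∂gaussianReal 0 1) :
    ∃ r : ℝ[X], (∀ x, g x = r.eval x) ∧ ∀ k, hermiteCoeff g k
      = k * ρ ^ (k - 1) * hermiteCoeff f (k - 1) + μ * ρ ^ k * hermiteCoeff f k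
        + ρ ^ (k + 1) * hermiteCoeff f (k + 1) := by
  obtain ⟨r, hr, hr'⟩ := exists_eval_eq_gaussianExpectation_comp hργ p
  have hgr : ∀ x, g x = ((C μ + X) * r).eval x := by
    intro x
    simp [hg, hf, ← hr, gaussianExpectation_apply]
  refine ⟨_, hgr, fun k ↦ ?_⟩
  simp only [hermiteCoeff_eq_gaussianExpectation hgr, hermiteCoeff_eq_gaussianExpectation hf,
    gaussianExpectation_affine_mul_mul_realHermite, hr']
  ring

section ConditionalMoments

variable {μ ρ γ : ℝ} {Q : ℕ → ℝ → ℝ}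

theorem exists_condMoment_eq_eval (hργ : ρ ^ 2 + γ ^ 2 = 1) (hQ0 : ∀ x, Q 0 x = 1)
    (hQ : ∀ N x, Q (N + 1) x = (μ + x) * ∫ y, Q N (ρ * x + γ * y) ∂gaussianReal 0 1) (N : ℕ) :
    ∃ p : ℝ[X], ∀ x, Q N x = p.eval x := by
  induction N with
  | zero => exact ⟨1, by simp [hQ0]⟩
  | succ N ih =>
    obtain ⟨p, hp⟩ := ih
    obtain ⟨r, hr, -⟩ := exists_eval_eq_and_hermiteCoeff_eq hργ hp (hQ N)
    exact ⟨r, hr⟩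

theorem hermiteCoeff_condMoment_succ (hργ : ρ ^ 2 + γ ^ 2 = 1) (hQ0 : ∀ x, Q 0 x = 1)
    (hQ : ∀ N x, Q (N + 1) x = (μ + x) * ∫ y, Q N (ρ * x + γ * y) ∂gaussianReal 0 1) (N k : ℕ) :
    hermiteCoeff (Q (N + 1)) k
      = k * ρ ^ (k - 1) * hermiteCoeff (Q N) (k - 1) + μ * ρ ^ k * hermiteCoeff (Q N) k
        + ρ ^ (k + 1) * hermiteCoeff (Q N) (k + 1) := by
  obtain ⟨p, hp⟩ := exists_condMoment_eq_eval hργ hQ0 hQ N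
  obtain ⟨r, -, hr⟩ := exists_eval_eq_and_hermiteCoeff_eq hργ hp (hQ N)
  exact hr k

theorem hermiteCoeff_condMoment_zero (hQ0 : ∀ x, Q 0 x = 1) (k : ℕ) :
    hermiteCoeff (Q 0) k = if k = 0 then 1 else 0 := by
  rw [hermiteCoeff_eq_gaussianExpectation (p := realHermite 0) (by simp [hQ0])]
  split_ifs with hk
  · simp [hk]
  · exact gaussianExpectation_realHermite_mul_realHermite_of_ne (Ne.symm hk)

theorem hermiteCoeff_condMoment_eq_zero_of_lt (hργ : ρ ^ 2 + γ ^ 2 = 1) (hQ0 : ∀ x, Q 0 x = 1)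
    (hQ : ∀ N x, Q (N + 1) x = (μ + x) * ∫ y, Q N (ρ * x + γ * y) ∂gaussianReal 0 1) {N k : ℕ}
    (hNk : N < k) : hermiteCoeff (Q N) k = 0 := by
  induction N generalizing k with
  | zero => simp [hermiteCoeff_condMoment_zero hQ0, hNk.ne']
  | succ N ih =>
    rw [hermiteCoeff_condMoment_succ hργ hQ0 hQ, ih (by omega), ih (by omega), ih (by omega)]
    ring

end ConditionalMoments

theorem Real.sqrt_factorial_succ (n : ℕ) : √((n + 1)! : ℝ) = √((n : ℝ) + 1) * √(n ! : ℝ) := by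
  rw [Nat.factorial_succ, Nat.cast_mul, Real.sqrt_mul (by positivity)]
  push_cast; rfl

theorem one_div_sqrt_factorial_mul_natCast (k : ℕ) :
    1 / √(k ! : ℝ) * k = √(k : ℝ) * (1 / √((k - 1)! : ℝ)) := by
  cases k with
  | zero => simp
  | succ n =>
    rw [Real.sqrt_factorial_succ, Nat.add_sub_cancel]
    have h := Real.mul_self_sqrt (by positivity : (0 : ℝ) ≤ n + 1)
    have : √(n ! : ℝ) ≠ 0 := by positivity
    have : √((n : ℝ) + 1) ≠ 0 := by positivity
    push_cast
    field_simp
    linarith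

theorem one_div_sqrt_factorial (k : ℕ) :
    1 / √(k ! : ℝ) = √((k : ℝ) + 1) * (1 / √((k + 1)! : ℝ)) := by
  rw [Real.sqrt_factorial_succ]
  have : √(k ! : ℝ) ≠ 0 := by positivity
  have : √((k : ℝ) + 1) ≠ 0 := by positivity
  field_simp

/-- Recurrence for the Hermite–Fourier coefficients
`q_{N,k} = (1/√k!) ∫ Q_N·He_k dN(0,1)` of the conditional product moments `Q_N`:
`q_{N+1,k} = √k ρ^{k-1} q_{N,k-1} + μ ρ^k q_{N,k} + √(k+1) ρ^{k+1} q_{N,k+1}`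
(with the convention `q_{N,-1} = 0`; for `k = 0` the first term vanishes since
`√0 = 0`), together with `q_{0,0} = 1`, `q_{0,k} = 0` for `k ≥ 1`, and
`q_{N,k} = 0` for `k > N`. -/
theorem hermite_fourier_coefficients_recurrence
    (μ ρ : ℝ) (hρ0 : 0 < ρ) (hρ1 : ρ < 1)
    (γ : ℝ) (hγ : γ = Real.sqrt (1 - ρ ^ 2))
    (Q : ℕ → ℝ → ℝ) (hQ0 : ∀ x, Q 0 x = 1)
    (hQ : ∀ N x, Q (N + 1) x
      = (μ + x) * ∫ y, Q N (ρ * x + γ * y) ∂(gaussianReal 0 1))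
    (q : ℕ → ℕ → ℝ)
    (hq : ∀ N k, q N k = (1 / Real.sqrt (Nat.factorial k))
      * ∫ x, Q N x * (Polynomial.aeval x (Polynomial.hermite k) : ℝ)
          ∂(gaussianReal 0 1)) :
    (∀ N k, q (N + 1) k
        = Real.sqrt k * ρ ^ (k - 1) * q N (k - 1)
          + μ * ρ ^ k * q N k
          + Real.sqrt (k + 1) * ρ ^ (k + 1) * q N (k + 1)) ∧
    q 0 0 = 1 ∧ (∀ k, 1 ≤ k → q 0 k = 0) ∧ (∀ N k, N < k → q N k = 0) := by
  have hργ : ρ ^ 2 + γ ^ 2 = 1 := by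
    rw [hγ, Real.sq_sqrt (by nlinarith)]; ring
  have hqc : ∀ N k, q N k = 1 / √(k ! : ℝ) * hermiteCoeff (Q N) k := hq
  refine ⟨fun N k ↦ ?_, ?_, fun k hk ↦ ?_, fun N k hNk ↦ ?_⟩
  · rw [hqc, hqc, hqc, hqc, hermiteCoeff_condMoment_succ hργ hQ0 hQ]
    linear_combination
      (ρ ^ (k - 1) * hermiteCoeff (Q N) (k - 1)) * one_div_sqrt_factorial_mul_natCast k
        + (ρ ^ (k + 1) * hermiteCoeff (Q N) (k + 1)) * one_div_sqrt_factorial k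
  · simp [hqc, hermiteCoeff_condMoment_zero hQ0]
  · rw [hqc, hermiteCoeff_condMoment_zero hQ0, if_neg (by omega), mul_zero]
  · simp [hqc, hermiteCoeff_condMoment_eq_zero_of_lt hργ hQ0 hQ hNk]
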